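/- For n ≥ 2, i_{B'}(n,2) = 2(n-2) + 4·C(n-1,2); explicitly, i_{B'}(n,2) = 2(n-2) + 2·(n-1)(n-2) for n ≥ 3, and i_{B'}(2,2) = 0; e.g. i_{B'}(3,2)=6, i_{B'}(4,2)=16, i_{B'}(5,2)=30. -/
import Mathlib


open Polynomial Finset

/-- Row generating polynomial of the over-Mahonian numbers:
`∏_{m=1}^{n-1} (1 + 2z + 2z² + ⋯ + 2zᵐ)`. -/
noncomputable def overMahonianPoly (n : ℕ) : Polynomial ℕ :=
  ∏ m ∈ Finset.Icc 1 (n - 1), (1 + 2 * ∑ j ∈ Finset.Icc 1 m, Polynomial.X ^ j)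

/-- The over-Mahonian number `i_{B'}(n,k)`. -/
noncomputable def overMahonian (n k : ℕ) : ℕ := (overMahonianPoly n).coeff k
lemma coeff_factor (m k : ℕ) :
    (1 + 2 * ∑ j ∈ Finset.Icc 1 m, Polynomial.X ^ j : Polynomial ℕ).coeff k
      = (if k = 0 then 1 else 0) + (if k ∈ Finset.Icc 1 m then 2 else 0) := by
  simp [Polynomial.coeff_one, Finset.mul_sum, Polynomial.finset_sum_coeff,
    Polynomial.coeff_X_pow, mul_ite, Finset.sum_ite_eq, eq_comm]

lemma poly_succ (n : ℕ) :
    overMahonianPoly (n+2) = overMahonianPoly (n+1) *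
      (1 + 2 * ∑ j ∈ Finset.Icc 1 (n+1), Polynomial.X ^ j) := by
  unfold overMahonianPoly
  rw [show (n+2)-1 = n+1 from rfl, show (n+1)-1 = n from rfl,
    Finset.prod_Icc_succ_top (by omega)]

lemma coeff_mul_two (p q : Polynomial ℕ) :
    (p * q).coeff 2 = p.coeff 0 * q.coeff 2 + p.coeff 1 * q.coeff 1 + p.coeff 2 * q.coeff 0 := by
  rw [Polynomial.coeff_mul, Finset.Nat.sum_antidiagonal_eq_sum_range_succ_mk]
  simp [Finset.sum_range_succ]

lemma coeff_mul_one (p q : Polynomial ℕ) :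
    (p * q).coeff 1 = p.coeff 0 * q.coeff 1 + p.coeff 1 * q.coeff 0 := by
  rw [Polynomial.coeff_mul, Finset.Nat.sum_antidiagonal_eq_sum_range_succ_mk]
  simp [Finset.sum_range_succ]

lemma c0 (n : ℕ) : (overMahonianPoly n).coeff 0 = 1 := by
  induction n with
  | zero => simp [overMahonianPoly, Polynomial.coeff_one]
  | succ n ih =>
    match n with
    | 0 => simp [overMahonianPoly, Polynomial.coeff_one]
    | n+1 =>
      rw [poly_succ, Polynomial.mul_coeff_zero, ih, coeff_factor]
      simp

lemma c1 (n : ℕ) : (overMahonianPoly n).coeff 1 = 2 * (n - 1) := by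
  induction n with
  | zero => simp [overMahonianPoly, Polynomial.coeff_one]
  | succ n ih =>
    match n with
    | 0 => simp [overMahonianPoly, Polynomial.coeff_one]
    | n+1 =>
      rw [poly_succ, coeff_mul_one, ih, c0, coeff_factor, coeff_factor]
      simp
      omega

lemma c2 (n : ℕ) : (overMahonianPoly n).coeff 2 = 2 * (n - 2) + 2 * ((n - 1) * (n - 2)) := by
  induction n with
  | zero => simp [overMahonianPoly, Polynomial.coeff_one]
  | succ n ih =>
    match n with
    | 0 => simp [overMahonianPoly, Polynomial.coeff_one]
    | n+1 =>
      rw [poly_succ, coeff_mul_two, ih, c0, c1, coeff_factor, coeff_factor, coeff_factor]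
      rcases n with _ | n
      · norm_num
      · simp
        ring_nf

theorem overMahonian_two :
    (∀ n : ℕ, 3 ≤ n → overMahonian n 2 = 2 * (n - 2) + 2 * ((n - 1) * (n - 2))) ∧
      overMahonian 2 2 = 0 ∧ overMahonian 3 2 = 6 ∧ overMahonian 4 2 = 16 ∧
      overMahonian 5 2 = 30 := by
  refine ⟨fun n _ => c2 n, ?_, ?_, ?_, ?_⟩ <;> simp [overMahonian, c2]
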